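/- Suppose M is determined by Y_{[k]}, i.e., H(M | Y_{[k]}) = 0. Then for every integer r with 1 ≤ r ≤ k, Σ_{S ⊆ {1,…,k}, |S| = r} H(M | Y_S, X) ≤ ((k−r)/k) · C(k,r) · H(Y_{[k]} | X); equivalently, the average of H(M | Y_S, X) over all r-element subsets S is at most ((k−r)/k) · H(Y_{[k]} | X). -/

import Mathlib

/-!
Put `f(S) = H(Y_S, X)`. Since `M` is a function of `Y_{[k]}`, conditioning on `(Y_S, X)` gives
`H(M | Y_S, X) ≤ H(Y_{[k]} | Y_S, X) = f([k]) - f(S)`. Strong subadditivity of entropy makes `f`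
submodular, and a submodular `f` satisfies Han's inequality
`∑_{|S| = r} (f(S) - f(∅)) ≥ C(k-1, r-1) (f([k]) - f(∅))`: order the indices, telescope
`f(S) - f(∅)` along `S`, bound each increment below by the increment over all smaller indices, and
count that each index lies in `C(k-1, r-1)` of the sets. Summing the first bound and using
`C(k,r) - C(k-1,r-1) = (k-r)/k · C(k,r)` gives the theorem.
-/

open Finset

/-- Probability that the finitely-valued random variable `X` takes value `x`,
with respect to the probability mass function `p` on the finite sample space `Ω`. -/
noncomputable def pmfProb {Ω : Type*} [Fintype Ω] {α : Type*} [Fintype α] [DecidableEq α]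
    (p : Ω → ℝ) (X : Ω → α) (x : α) : ℝ :=
  ∑ ω, if X ω = x then p ω else 0

/-- Shannon entropy (natural logarithm) of the random variable `X`. -/
noncomputable def entH {Ω : Type*} [Fintype Ω] {α : Type*} [Fintype α] [DecidableEq α]
    (p : Ω → ℝ) (X : Ω → α) : ℝ :=
  ∑ x, Real.negMulLog (pmfProb p X x)

/-- Conditional Shannon entropy `H(X|Y) = H(X,Y) - H(Y)`. -/
noncomputable def condH {Ω : Type*} [Fintype Ω] {α β : Type*} [Fintype α] [DecidableEq α]
    [Fintype β] [DecidableEq β] (p : Ω → ℝ) (X : Ω → α) (Y : Ω → β) : ℝ :=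
  entH p (fun ω => (X ω, Y ω)) - entH p Y

/-- Mutual information `I(X;Y) = H(X) + H(Y) - H(X,Y)`. -/
noncomputable def mutInfo {Ω : Type*} [Fintype Ω] {α β : Type*} [Fintype α] [DecidableEq α]
    [Fintype β] [DecidableEq β] (p : Ω → ℝ) (X : Ω → α) (Y : Ω → β) : ℝ :=
  entH p X + entH p Y - entH p (fun ω => (X ω, Y ω))

/-- The conditional probability mass function given an event `E`. -/
noncomputable def condPMF {Ω : Type*} [Fintype Ω] (p : Ω → ℝ) (E : Ω → Prop)
    [DecidablePred E] : Ω → ℝ :=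
  fun ω => if E ω then p ω / (∑ ω' ∈ Finset.univ.filter E, p ω') else 0

section Entropy
variable {Ω α β γ : Type*} [Fintype Ω] [Fintype α] [DecidableEq α] [Fintype β] [DecidableEq β]
  [Fintype γ] [DecidableEq γ] {p : Ω → ℝ}

lemma pmfProb_nonneg (hp : ∀ ω, 0 ≤ p ω) (V : Ω → α) (x : α) : 0 ≤ pmfProb p V x :=
  sum_nonneg fun ω _ => by split <;> simp [hp ω]

lemma le_pmfProb (hp : ∀ ω, 0 ≤ p ω) (V : Ω → α) (ω : Ω) : p ω ≤ pmfProb p V (V ω) := by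
  simpa [pmfProb] using single_le_sum (f := fun ω' => if V ω' = V ω then p ω' else 0)
    (fun ω' _ => by split <;> simp [hp ω']) (mem_univ ω)

lemma pmfProb_pos (hp : ∀ ω, 0 ≤ p ω) (V : Ω → α) {ω : Ω} (hω : 0 < p ω) :
    0 < pmfProb p V (V ω) :=
  hω.trans_le (le_pmfProb hp V ω)

lemma sum_pmfProb_mul (V : Ω → α) (g : α → ℝ) :
    ∑ x, pmfProb p V x * g x = ∑ ω, p ω * g (V ω) := by
  simp only [pmfProb, sum_mul, ite_mul, zero_mul]
  rw [sum_comm]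
  simp

lemma sum_pmfProb (V : Ω → α) : ∑ x, pmfProb p V x = ∑ ω, p ω := by
  simpa using sum_pmfProb_mul (p := p) V 1

lemma sum_pmfProb_prodMk_left (V : Ω → α) (W : Ω → β) (b : β) :
    ∑ a, pmfProb p (fun ω => (V ω, W ω)) (a, b) = pmfProb p W b := by
  simp only [pmfProb]
  rw [sum_comm]
  simp [Prod.ext_iff, ite_and]

lemma entH_eq_neg_sum (V : Ω → α) :
    entH p V = -∑ ω, p ω * Real.log (pmfProb p V (V ω)) := by
  rw [← sum_pmfProb_mul V (fun x => Real.log (pmfProb p V x)), ← sum_neg_distrib]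
  simp only [entH, Real.negMulLog, neg_mul]

lemma entH_congr {V : Ω → α} {W : Ω → β} (h : ∀ ω ω', V ω = V ω' ↔ W ω = W ω') :
    entH p V = entH p W := by
  have hfiber : ∀ ω, pmfProb p V (V ω) = pmfProb p W (W ω) := fun ω =>
    sum_congr rfl fun ω' _ => if_congr (h ω' ω) rfl rfl
  simp only [entH_eq_neg_sum, hfiber]

lemma entH_le_of_determines (hp : ∀ ω, 0 ≤ p ω) {V : Ω → α} {W : Ω → β}
    (h : ∀ ω ω', W ω = W ω' → V ω = V ω') : entH p V ≤ entH p W := by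
  rw [entH_eq_neg_sum, entH_eq_neg_sum, neg_le_neg_iff]
  refine sum_le_sum fun ω _ => ?_
  rcases (hp ω).eq_or_lt with h0 | h0
  · simp [← h0]
  · have hle : pmfProb p W (W ω) ≤ pmfProb p V (V ω) :=
      sum_le_sum fun ω' _ => by
        by_cases hw : W ω' = W ω
        · simp [hw, h ω' ω hw]
        · simp only [hw, if_false]
          split <;> simp [hp ω']
    exact mul_le_mul_of_nonneg_left
      (Real.log_le_log (h0.trans_le (le_pmfProb hp W ω)) hle) h0.le

/-- The ratio of the Gibbs argument below has mean at most one: summing over `a` first collapses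
`q(a,c)` to `q(c)`. -/
lemma sum_mul_ratio_le (hp : ∀ ω, 0 ≤ p ω) (A : Ω → α) (B : Ω → β) (C : Ω → γ) :
    ∑ ω, p ω * (pmfProb p (fun ω => (A ω, C ω)) (A ω, C ω)
        * pmfProb p (fun ω => (B ω, C ω)) (B ω, C ω)
        / (pmfProb p (fun ω => (A ω, B ω, C ω)) (A ω, B ω, C ω) * pmfProb p C (C ω)))
      ≤ ∑ ω, p ω := by
  set q := pmfProb p (fun ω => (A ω, B ω, C ω))
  set qac := pmfProb p (fun ω => (A ω, C ω))
  set qbc := pmfProb p (fun ω => (B ω, C ω))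
  set qc := pmfProb p C
  have hq : ∀ v, 0 ≤ q v := pmfProb_nonneg hp _
  have hqac : ∀ v, 0 ≤ qac v := pmfProb_nonneg hp _
  have hqbc : ∀ v, 0 ≤ qbc v := pmfProb_nonneg hp _
  have hqc : ∀ v, 0 ≤ qc v := pmfProb_nonneg hp _
  calc _ = ∑ v : α × β × γ, q v * (qac (v.1, v.2.2) * qbc (v.2.1, v.2.2) / (q v * qc v.2.2)) :=
        (sum_pmfProb_mul _ _).symm
    _ ≤ ∑ v : α × β × γ, qac (v.1, v.2.2) * (qbc (v.2.1, v.2.2) / qc v.2.2) := by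
        refine sum_le_sum fun v _ => ?_
        rcases (hq v).eq_or_lt with h0 | h0
        · rw [← h0, zero_mul]
          exact mul_nonneg (hqac _) (div_nonneg (hqbc _) (hqc _))
        · rw [← mul_div_assoc, mul_div_mul_left _ _ h0.ne', mul_div_assoc]
    _ = ∑ bc : β × γ, qc bc.2 * (qbc bc / qc bc.2) := by
        rw [Fintype.sum_prod_type, sum_comm]
        simp only [← sum_mul, qac, sum_pmfProb_prodMk_left]
        rfl
    _ ≤ ∑ bc : β × γ, qbc bc := sum_le_sum fun bc _ => by
        rcases (hqc bc.2).eq_or_lt with h0 | h0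
        · rw [← h0, zero_mul]
          exact hqbc bc
        · rw [mul_div_cancel₀ _ h0.ne']
    _ = ∑ ω, p ω := sum_pmfProb _

lemma entH_triple_add_entH_le (hp : ∀ ω, 0 ≤ p ω) (A : Ω → α) (B : Ω → β) (C : Ω → γ) :
    entH p (fun ω => (A ω, B ω, C ω)) + entH p C
      ≤ entH p (fun ω => (A ω, C ω)) + entH p (fun ω => (B ω, C ω)) := by
  set q := pmfProb p (fun ω => (A ω, B ω, C ω))
  set qac := pmfProb p (fun ω => (A ω, C ω))
  set qbc := pmfProb p (fun ω => (B ω, C ω))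
  set qc := pmfProb p C
  -- `log x ≤ x - 1` at `x = q(a,c) q(b,c) / (q(a,b,c) q(c))`
  have hgibbs : ∀ ω, p ω * (Real.log (qac (A ω, C ω)) + Real.log (qbc (B ω, C ω))
        - Real.log (q (A ω, B ω, C ω)) - Real.log (qc (C ω)))
      ≤ p ω * (qac (A ω, C ω) * qbc (B ω, C ω) / (q (A ω, B ω, C ω) * qc (C ω))) - p ω := by
    intro ω
    rcases (hp ω).eq_or_lt with h0 | h0
    · simp [← h0]
    have h1 : 0 < qac (A ω, C ω) := pmfProb_pos hp _ h0
    have h2 : 0 < qbc (B ω, C ω) := pmfProb_pos hp _ h0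
    have h3 : 0 < q (A ω, B ω, C ω) := pmfProb_pos hp _ h0
    have h4 : 0 < qc (C ω) := pmfProb_pos hp _ h0
    have hlog := Real.log_le_sub_one_of_pos (div_pos (mul_pos h1 h2) (mul_pos h3 h4))
    rw [Real.log_div (by positivity) (by positivity), Real.log_mul h1.ne' h2.ne',
      Real.log_mul h3.ne' h4.ne'] at hlog
    linarith [mul_le_mul_of_nonneg_left hlog h0.le]
  have hsum := sum_le_sum fun ω (_ : ω ∈ univ) => hgibbs ω
  simp only [mul_sub, mul_add, sum_sub_distrib, sum_add_distrib] at hsum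
  simp only [entH_eq_neg_sum]
  linarith [sum_mul_ratio_le hp A B C]

theorem condH_le_condH_of_condH_eq_zero (hp : ∀ ω, 0 ≤ p ω) {M : Ω → α} {Y : Ω → β}
    (hM : condH p M Y = 0) (W : Ω → γ) : condH p M W ≤ condH p Y W := by
  have hMW : entH p (fun ω => (M ω, W ω)) ≤ entH p (fun ω => (M ω, W ω, Y ω)) :=
    entH_le_of_determines hp fun ω ω' h => by simp_all [Prod.ext_iff]
  have hYW : entH p (fun ω => (Y ω, W ω)) = entH p (fun ω => (W ω, Y ω)) :=
    entH_congr fun ω ω' => by simp [Prod.ext_iff, and_comm]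
  have := entH_triple_add_entH_le hp M W Y
  unfold condH at hM ⊢
  linarith

end Entropy

section Submodular
variable {ι : Type*}

def IsSubmodular [DecidableEq ι] (f : Finset ι → ℝ) : Prop :=
  ∀ s t, f (s ∪ t) + f (s ∩ t) ≤ f s + f t

theorem IsSubmodular.add_insert_le [DecidableEq ι] {f : Finset ι → ℝ} (hf : IsSubmodular f)
    {s t : Finset ι} (hst : s ⊆ t) {i : ι} (hi : i ∉ t) :
    f (insert i t) + f s ≤ f (insert i s) + f t := by
  have h := hf (insert i s) t
  rwa [insert_union, union_eq_right.2 hst, insert_inter_of_notMem hi, inter_eq_left.2 hst] at h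

variable [Fintype ι] [LinearOrder ι]

def gainBelow (f : Finset ι → ℝ) (i : ι) : ℝ :=
  f (insert i ({j | j < i} : Finset ι)) - f ({j | j < i} : Finset ι)

theorem IsSubmodular.sum_gainBelow_le {f : Finset ι → ℝ} (hf : IsSubmodular f) (s : Finset ι) :
    ∑ i ∈ s, gainBelow f i ≤ f s - f ∅ := by
  induction s using Finset.induction_on_max with
  | empty => simp
  | insert a s hlt ih =>
    have hsub : s ⊆ ({j | j < a} : Finset ι) := fun j hj => by simpa using hlt j hj
    have := hf.add_insert_le hsub (i := a) (by simp)
    rw [sum_insert fun h => lt_irrefl a (hlt a h), gainBelow]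
    linarith

theorem sum_gainBelow_of_isLowerSet {f : Finset ι → ℝ} {s : Finset ι}
    (hs : IsLowerSet (s : Set ι)) : ∑ i ∈ s, gainBelow f i = f s - f ∅ := by
  induction s using Finset.induction_on_max with
  | empty => simp
  | insert a s hlt ih =>
    have mem_of_lt : ∀ {j}, j < a → j ∈ s := fun hj =>
      (mem_insert.1 (hs hj.le (mem_coe.2 (mem_insert_self a s)))).resolve_left hj.ne
    have hs_eq : s = ({j | j < a} : Finset ι) := by
      ext j
      simpa using ⟨hlt j, mem_of_lt⟩
    have hs_lower : IsLowerSet (s : Set ι) := fun x y hyx hx =>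
      mem_of_lt (hyx.trans_lt (hlt x hx))
    rw [sum_insert fun h => lt_irrefl a (hlt a h), ih hs_lower, gainBelow, ← hs_eq]
    ring

theorem sum_gainBelow_univ (f : Finset ι → ℝ) : ∑ i, gainBelow f i = f univ - f ∅ :=
  sum_gainBelow_of_isLowerSet (by simpa using isLowerSet_univ)

theorem IsSubmodular.choose_mul_sub_le_sum_powersetCard {f : Finset ι → ℝ} (hf : IsSubmodular f)
    {r : ℕ} (hr : 1 ≤ r) :
    ((Fintype.card ι - 1).choose (r - 1) : ℝ) * (f univ - f ∅)
      ≤ ∑ s ∈ powersetCard r univ, (f s - f ∅) := by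
  have hcount : ∀ i : ι,
      #{s ∈ powersetCard r univ | i ∈ s} = (Fintype.card ι - 1).choose (r - 1) := fun i => by
    simpa using card_filter_powersetCard_subset {i} univ r (by simp) (by simpa using hr)
  calc ((Fintype.card ι - 1).choose (r - 1) : ℝ) * (f univ - f ∅)
      = ∑ i, ∑ s ∈ powersetCard r univ with i ∈ s, gainBelow f i := by
        simp only [sum_const, hcount, nsmul_eq_mul, ← mul_sum, sum_gainBelow_univ]
    _ = ∑ s ∈ powersetCard r univ, ∑ i ∈ s, gainBelow f i :=
        (sum_comm' fun s i => by simp [and_comm]).symm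
    _ ≤ ∑ s ∈ powersetCard r univ, (f s - f ∅) := sum_le_sum fun s _ => hf.sum_gainBelow_le s

end Submodular

section EntropyOfSubfamilies
variable {Ω ι α β : Type*} [Fintype Ω] [DecidableEq ι] [Fintype α] [DecidableEq α] [Fintype β]
  [DecidableEq β]

/-- `entHOn p X Y s` is the joint entropy `H(Y_s, X)`. -/
noncomputable def entHOn (p : Ω → ℝ) (X : Ω → β) (Y : ι → Ω → α) (s : Finset ι) : ℝ :=
  entH p (fun ω => ((fun j : ↥s => Y j.1 ω), X ω))

variable {p : Ω → ℝ}

theorem entHOn_isSubmodular (hp : ∀ ω, 0 ≤ p ω) (X : Ω → β) (Y : ι → Ω → α) :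
    IsSubmodular (entHOn p X Y) := by
  intro s t
  have h := entH_triple_add_entH_le hp (fun ω (j : ↥s) => Y j.1 ω) (fun ω (j : ↥t) => Y j.1 ω)
    (fun ω => ((fun j : ↥(s ∩ t) => Y j.1 ω), X ω))
  have e1 : entH p (fun ω => ((fun j : ↥s => Y j.1 ω), (fun j : ↥t => Y j.1 ω),
      ((fun j : ↥(s ∩ t) => Y j.1 ω), X ω))) = entHOn p X Y (s ∪ t) :=
    entH_congr fun ω ω' => by
      simp only [Prod.ext_iff, funext_iff, Subtype.forall, mem_union, mem_inter]
      grind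
  have e2 : entH p (fun ω => ((fun j : ↥s => Y j.1 ω), ((fun j : ↥(s ∩ t) => Y j.1 ω), X ω)))
      = entHOn p X Y s :=
    entH_congr fun ω ω' => by
      simp only [Prod.ext_iff, funext_iff, Subtype.forall, mem_inter]
      grind
  have e3 : entH p (fun ω => ((fun j : ↥t => Y j.1 ω), ((fun j : ↥(s ∩ t) => Y j.1 ω), X ω)))
      = entHOn p X Y t :=
    entH_congr fun ω ω' => by
      simp only [Prod.ext_iff, funext_iff, Subtype.forall, mem_inter]
      grind
  rwa [e1, e2, e3] at h

theorem condH_pi_eq_entHOn_univ_sub [Fintype ι] (X : Ω → β) (Y : ι → Ω → α) (s : Finset ι) :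
    condH p (fun ω j => Y j ω) (fun ω => ((fun j : ↥s => Y j.1 ω), X ω))
      = entHOn p X Y univ - entHOn p X Y s := by
  have e : entH p (fun ω => ((fun j => Y j ω), (fun j : ↥s => Y j.1 ω), X ω))
      = entHOn p X Y univ :=
    entH_congr fun ω ω' => by
      simp only [Prod.ext_iff, funext_iff, Subtype.forall, mem_univ, forall_const]
      grind
  rw [condH, e]
  rfl

theorem condH_pi_eq_entHOn_univ_sub_empty [Fintype ι] (X : Ω → β) (Y : ι → Ω → α) :
    condH p (fun ω j => Y j ω) X = entHOn p X Y univ - entHOn p X Y ∅ := by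
  rw [← condH_pi_eq_entHOn_univ_sub]
  exact congrArg₂ _ (entH_congr fun ω ω' => by simp [Prod.ext_iff, funext_iff])
    (entH_congr fun ω ω' => by simp [Prod.ext_iff, funext_iff])

end EntropyOfSubfamilies

theorem cast_sub_div_mul_choose {k r : ℕ} (hr : 1 ≤ r) (hk : 1 ≤ k) :
    ((k : ℝ) - r) / k * k.choose r = k.choose r - (k - 1).choose (r - 1) := by
  obtain ⟨n, rfl⟩ := Nat.exists_eq_add_of_le' hk
  obtain ⟨m, rfl⟩ := Nat.exists_eq_add_of_le' hr
  have h : ((n + 1 : ℕ) : ℝ) * n.choose m = (n + 1).choose (m + 1) * (m + 1 : ℕ) := by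
    exact_mod_cast Nat.add_one_mul_choose_eq n m
  simp only [Nat.add_sub_cancel]
  field_simp
  push_cast at h ⊢
  linarith

theorem sum_condEntropy_message_le_general {Ω α β μ : Type*} [Fintype Ω] [Fintype α]
    [DecidableEq α] [Fintype β] [DecidableEq β] [Fintype μ] [DecidableEq μ]
    (p : Ω → ℝ) (hp : ∀ ω, 0 ≤ p ω)
    (k : ℕ) (X : Ω → β) (Y : Fin k → Ω → α) (M : Ω → μ)
    (hM : condH p M (fun ω (j : Fin k) => Y j ω) = 0)
    (r : ℕ) (hr1 : 1 ≤ r) (hrk : r ≤ k) :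
    ∑ S ∈ Finset.powersetCard r (Finset.univ : Finset (Fin k)),
        condH p M (fun ω => ((fun j : ↥S => Y j.1 ω), X ω))
      ≤ ((k : ℝ) - (r : ℝ)) / (k : ℝ) * (k.choose r : ℝ)
          * condH p (fun ω (j : Fin k) => Y j ω) X := by
  set f := entHOn p X Y
  have han := (entHOn_isSubmodular hp X Y).choose_mul_sub_le_sum_powersetCard hr1
  rw [Fintype.card_fin] at han
  calc _ ≤ ∑ S ∈ powersetCard r univ, (f univ - f S) := sum_le_sum fun S _ =>
        (condH_le_condH_of_condH_eq_zero hp hM _).trans_eq (condH_pi_eq_entHOn_univ_sub X Y S)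
    _ = k.choose r * (f univ - f ∅) - ∑ S ∈ powersetCard r univ, (f S - f ∅) := by
        simp only [sum_sub_distrib, sum_const, card_powersetCard, card_univ, Fintype.card_fin,
          nsmul_eq_mul]
        ring
    _ ≤ (k.choose r - (k - 1).choose (r - 1)) * (f univ - f ∅) := by linarith
    _ = _ := by
        rw [cast_sub_div_mul_choose hr1 (hr1.trans hrk), condH_pi_eq_entHOn_univ_sub_empty]

/-- if `M` is determined by `Y_{[k]}` (i.e. `H(M | Y_{[k]}) = 0`), then for
every `1 ≤ r ≤ k`,
`∑_{|S| = r} H(M | Y_S, X) ≤ ((k-r)/k) * C(k,r) * H(Y_{[k]} | X)`. -/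
theorem sum_condEntropy_message_le {Ω α β μ : Type*} [Fintype Ω] [Fintype α]
    [DecidableEq α] [Fintype β] [DecidableEq β] [Fintype μ] [DecidableEq μ]
    (p : Ω → ℝ) (hp : ∀ ω, 0 ≤ p ω) (hp1 : ∑ ω, p ω = 1)
    (k : ℕ) (X : Ω → β) (Y : Fin k → Ω → α) (M : Ω → μ)
    (hM : condH p M (fun ω (j : Fin k) => Y j ω) = 0)
    (r : ℕ) (hr1 : 1 ≤ r) (hrk : r ≤ k) :
    ∑ S ∈ Finset.powersetCard r (Finset.univ : Finset (Fin k)),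
        condH p M (fun ω => ((fun j : ↥S => Y j.1 ω), X ω))
      ≤ ((k : ℝ) - (r : ℝ)) / (k : ℝ) * (k.choose r : ℝ)
          * condH p (fun ω (j : Fin k) => Y j ω) X :=
  sum_condEntropy_message_le_general p hp k X Y M hM r hr1 hrk
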